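/- Let V be a complex inner product space, r a vector with ‖r‖ = f₀, and suppose f₀ > f₁ ≥ 0. Let y be a unit vector orthogonal to r, set c = √(f₀² - f₁²)/f₀, w = c • (f₀⁻¹ • r) + √(1 - c²) • y, and r' = r - ⟪r, w⟫ • w. Then ‖r'‖ = f₁. -/

import Mathlib

/-!
With `u = f₀⁻¹ • r`, the vector `w = c • u + √(1 - c²) • y` is a unit vector with `⟪w, r⟫ = c f₀`.
Removing the component of `r` along a unit vector `w` leaves, by Pythagoras, squared norm
`‖r‖² - |⟪w, r⟫|² = f₀² (1 - c²)`, and `c` is chosen so that this is `f₁²`.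
-/

open scoped InnerProductSpace

section

variable {𝕜 E : Type*} [RCLike 𝕜] [NormedAddCommGroup E] [InnerProductSpace 𝕜 E]

theorem norm_sub_inner_smul_sq_of_norm_eq_one {w : E} (hw : ‖w‖ = 1) (x : E) :
    ‖x - ⟪w, x⟫_𝕜 • w‖ ^ 2 = ‖x‖ ^ 2 - ‖⟪w, x⟫_𝕜‖ ^ 2 := by
  have horth : ⟪x - ⟪w, x⟫_𝕜 • w, ⟪w, x⟫_𝕜 • w⟫_𝕜 = 0 := by
    rw [inner_smul_right, inner_sub_left, inner_smul_left, inner_self_eq_norm_sq_to_K, hw,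
      ← inner_conj_symm w x]
    simp
  have hpyth := norm_add_sq (𝕜 := 𝕜) (x - ⟪w, x⟫_𝕜 • w) (⟪w, x⟫_𝕜 • w)
  rw [sub_add_cancel, horth, map_zero, mul_zero, add_zero, norm_smul, hw, mul_one] at hpyth
  linarith

theorem norm_smul_add_smul_sq_of_orthonormal {u y : E} (hu : ‖u‖ = 1) (hy : ‖y‖ = 1)
    (huy : ⟪u, y⟫_𝕜 = 0) (a b : 𝕜) :
    ‖a • u + b • y‖ ^ 2 = ‖a‖ ^ 2 + ‖b‖ ^ 2 := by
  have horth : ⟪a • u, b • y⟫_𝕜 = 0 := by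
    rw [inner_smul_left, inner_smul_right, huy, mul_zero, mul_zero]
  rw [norm_add_sq (𝕜 := 𝕜), horth, map_zero, mul_zero, add_zero, norm_smul, norm_smul, hu, hy,
    mul_one, mul_one]

theorem inner_smul_add_smul_left_of_orthonormal {u y : E} (hu : ‖u‖ = 1) (huy : ⟪u, y⟫_𝕜 = 0)
    (a b : 𝕜) : ⟪a • u + b • y, u⟫_𝕜 = (starRingEnd 𝕜) a := by
  rw [inner_add_left, inner_smul_left, inner_smul_left, inner_self_eq_norm_sq_to_K, hu,
    inner_eq_zero_symm.mp huy]
  simp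

end

theorem stmt3 {V : Type*} [NormedAddCommGroup V] [InnerProductSpace ℂ V]
    (f₀ f₁ : ℝ) (h01 : f₀ > f₁) (h1 : f₁ ≥ 0)
    (r y : V) (hr : ‖r‖ = f₀) (hy : ‖y‖ = 1) (hry : ⟪r, y⟫_ℂ = 0)
    (c : ℝ) (hc : c = Real.sqrt (f₀ ^ 2 - f₁ ^ 2) / f₀)
    (w : V) (hw : w = (c : ℂ) • ((f₀ : ℂ)⁻¹ • r) + ((Real.sqrt (1 - c ^ 2) : ℝ) : ℂ) • y)
    (r' : V) (hr' : r' = r - ⟪w, r⟫_ℂ • w) :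
    ‖r'‖ = f₁ := by
  have hf₀ : 0 < f₀ := h1.trans_lt h01
  set u := (f₀ : ℂ)⁻¹ • r with hu_def
  have hu : ‖u‖ = 1 := by
    rw [norm_smul, norm_inv, Complex.norm_real, Real.norm_of_nonneg hf₀.le, hr, inv_mul_cancel₀ hf₀.ne']
  have hru : r = (f₀ : ℂ) • u := by
    rw [hu_def, smul_inv_smul₀ (Complex.ofReal_ne_zero.mpr hf₀.ne')]
  have huy : ⟪u, y⟫_ℂ = 0 := by rw [inner_smul_left, hry, mul_zero]
  have hc_sq : c ^ 2 * f₀ ^ 2 = f₀ ^ 2 - f₁ ^ 2 := by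
    rw [hc, div_pow, Real.sq_sqrt (by nlinarith), div_mul_cancel₀ _ (by positivity)]
  have hc_le : c ^ 2 ≤ 1 :=
    le_of_mul_le_mul_right (by nlinarith : c ^ 2 * f₀ ^ 2 ≤ 1 * f₀ ^ 2) (by positivity)
  have hw_norm : ‖w‖ = 1 := by
    have := norm_smul_add_smul_sq_of_orthonormal hu hy huy (c : ℂ) (Real.sqrt (1 - c ^ 2) : ℂ)
    rw [Complex.norm_real, Complex.norm_real, Real.norm_eq_abs, Real.norm_eq_abs, sq_abs, sq_abs,
      Real.sq_sqrt (by linarith), add_sub_cancel, ← hw] at this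
    exact (pow_eq_one_iff_of_nonneg (norm_nonneg w) two_ne_zero).mp this
  have hwr : ⟪w, r⟫_ℂ = ((c * f₀ : ℝ) : ℂ) := by
    rw [hru, inner_smul_right, hw, inner_smul_add_smul_left_of_orthonormal hu huy, Complex.conj_ofReal]
    push_cast
    ring
  have hr'_sq : ‖r'‖ ^ 2 = f₁ ^ 2 := by
    rw [hr', norm_sub_inner_smul_sq_of_norm_eq_one hw_norm, hwr, Complex.norm_real, Real.norm_eq_abs,
      sq_abs, hr]
    linarith
  exact (sq_eq_sq₀ (norm_nonneg _) h1).mp hr'_sq
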